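/- Let p be a prime and let C ∈ F̄_p[[X]] be an algebraic power series (algebraic over the field of rational functions). Then the dimension κ(τ(C)) of the p-kernel of the shifted series τ(C) satisfies κ(τ(C)) ≤ 2·κ(C), and conversely κ(C) ≤ 1 + 2·κ(τ(C)). -/

import Mathlib

/-!
Every generator of the `p`-kernel of `τ(C)` is either a generator `C_{k+1,f}` of the `p`-kernel
of `C` or, when `k + 1 = p^f`, the shift `τ(C_{0,f})` of one; hence
`K(τ(C)) ⊆ K(C) + τ(K(C))`. Conversely `C = γ₀ + X·τ(C)`, `C_{k,f} = τ(C)_{k-1,f}` for `k ≥ 1`, and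
`C_{0,f} = γ₀ + X·τ(C)_{p^f-1,f}`, so `K(C)` lies in the constants plus `K(τ(C)) + X·K(τ(C))`.
Taking dimensions gives both bounds; when one kernel is infinite-dimensional so is the other, and
`finrank` makes both sides `0`.
-/

open PowerSeries

/-- The shift operator `τ(Σ αₙXⁿ) = Σ α_{n+1}Xⁿ`. -/
noncomputable def shift {K : Type*} [Field K] (A : PowerSeries K) : PowerSeries K :=
  PowerSeries.mk fun n => coeff (n + 1) A

/-- The `p`-kernel of `C = Σ γₙXⁿ`: the span of `C` together with all the series
`C_{k,f} = Σ_{n≥0} γ_{k+np^f} Xⁿ` for `f ≥ 1` and `0 ≤ k < p^f`. -/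
noncomputable def pKernel {K : Type*} [Field K] (p : ℕ) (C : PowerSeries K) :
    Submodule K (PowerSeries K) :=
  Submodule.span K ({C} ∪
    {D | ∃ f k : ℕ, 1 ≤ f ∧ k < p ^ f ∧
      D = PowerSeries.mk fun n => coeff (k + n * p ^ f) C})

/-- `κ(C)`: the dimension of the `p`-kernel of `C`. -/
noncomputable def kappa {K : Type*} [Field K] (p : ℕ) (C : PowerSeries K) : ℕ :=
  Module.finrank K ↥(pKernel p C)

open Module

section FinrankSup

variable {K M : Type*} [DivisionRing K] [AddCommGroup M] [Module K M]

theorem Submodule.finrank_le_of_le_sup_sup_map {U V W : Submodule K M} [FiniteDimensional K W]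
    (f : M →ₗ[K] M) (hle : U ≤ W ⊔ V ⊔ V.map f)
    (hfin : FiniteDimensional K U → FiniteDimensional K V) :
    finrank K U ≤ finrank K W + 2 * finrank K V := by
  by_cases hU : FiniteDimensional K U
  · have := hfin hU
    calc finrank K U ≤ finrank K ↥(W ⊔ V ⊔ V.map f) := Submodule.finrank_mono hle
      _ ≤ finrank K W + finrank K V + finrank K ↥(V.map f) :=
        (Submodule.finrank_add_le_finrank_add_finrank _ _).trans
          (Nat.add_le_add_right (Submodule.finrank_add_le_finrank_add_finrank _ _) _)
      _ ≤ finrank K W + 2 * finrank K V := by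
        have := Submodule.finrank_map_le f V
        omega
  · simp [finrank_of_infinite_dimensional hU]

end FinrankSup

namespace PowerSeries

variable {K : Type*} [Field K]

@[simp] theorem coeff_shift (A : K⟦X⟧) (n : ℕ) : coeff n (shift A) = coeff (n + 1) A :=
  coeff_mk _ _

variable (K) in
noncomputable def shiftₗ : K⟦X⟧ →ₗ[K] K⟦X⟧ where
  toFun := shift
  map_add' A B := by ext n; simp
  map_smul' c A := by ext n; simp

theorem eq_X_mul_shift_add_C (A : K⟦X⟧) : A = X * shift A + C (constantCoeff A) :=
  eq_X_mul_shift_add_const A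

/-- `C_{k,f} = decimate (p ^ f) k C`. -/
noncomputable def decimate (q k : ℕ) (A : K⟦X⟧) : K⟦X⟧ :=
  mk fun n => coeff (k + n * q) A

theorem decimate_shift (q k : ℕ) (A : K⟦X⟧) : decimate q k (shift A) = decimate q (k + 1) A := by
  ext n
  simp only [decimate, coeff_mk, coeff_shift]
  ring_nf

theorem shift_decimate_zero (q : ℕ) (A : K⟦X⟧) : shift (decimate q 0 A) = decimate q q A := by
  ext n
  simp only [decimate, coeff_mk, coeff_shift]
  ring_nf

theorem decimate_zero_eq_X_mul_add_C (q : ℕ) (hq : 0 < q) (A : K⟦X⟧) :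
    decimate q 0 A = X * decimate q (q - 1) (shift A) + C (constantCoeff A) := by
  rw [decimate_shift, Nat.sub_add_cancel hq, ← shift_decimate_zero]
  conv_lhs => rw [eq_X_mul_shift_add_C (decimate q 0 A)]
  simp [decimate]

end PowerSeries

section Kernel

variable {K : Type*} [Field K]

theorem self_mem_pKernel (p : ℕ) (C : K⟦X⟧) : C ∈ pKernel p C :=
  Submodule.subset_span (Or.inl rfl)

theorem decimate_mem_pKernel (p : ℕ) (C : K⟦X⟧) {f k : ℕ} (hf : 1 ≤ f) (hk : k < p ^ f) :
    decimate (p ^ f) k C ∈ pKernel p C :=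
  Submodule.subset_span (Or.inr ⟨f, k, hf, hk, rfl⟩)

theorem pKernel_le_iff {p : ℕ} {C : K⟦X⟧} {S : Submodule K K⟦X⟧} :
    pKernel p C ≤ S ↔
      C ∈ S ∧ ∀ f k : ℕ, 1 ≤ f → k < p ^ f → decimate (p ^ f) k C ∈ S := by
  simp only [pKernel, Submodule.span_le, Set.union_subset_iff, Set.singleton_subset_iff]
  refine and_congr Iff.rfl ⟨fun h f k hf hk => h ⟨f, k, hf, hk, rfl⟩, ?_⟩
  rintro h D ⟨f, k, hf, hk, rfl⟩
  exact h f k hf hk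

theorem pKernel_shift_le (p : ℕ) (C : K⟦X⟧) :
    pKernel p (shift C) ≤ pKernel p C ⊔ (pKernel p C).map (shiftₗ K) := by
  refine pKernel_le_iff.2 ⟨Submodule.mem_sup_right ⟨C, self_mem_pKernel p C, rfl⟩, ?_⟩
  intro f k hf hk
  rw [decimate_shift]
  rcases Nat.lt_or_ge (k + 1) (p ^ f) with hk' | hk'
  · exact Submodule.mem_sup_left (decimate_mem_pKernel p C hf hk')
  · rw [show k + 1 = p ^ f by omega, ← shift_decimate_zero]
    exact Submodule.mem_sup_right ⟨_, decimate_mem_pKernel p C hf (by omega), rfl⟩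

theorem pKernel_le_sup_pKernel_shift (p : ℕ) (C : K⟦X⟧) :
    pKernel p C ≤ (K ∙ 1) ⊔ pKernel p (shift C) ⊔
      (pKernel p (shift C)).map (LinearMap.mulLeft K X) := by
  have hXC : ∀ D ∈ pKernel p (shift C), ∀ a : K, X * D + PowerSeries.C a ∈
      (K ∙ 1) ⊔ pKernel p (shift C) ⊔ (pKernel p (shift C)).map (LinearMap.mulLeft K X) :=
    fun D hD a => add_mem (Submodule.mem_sup_right ⟨D, hD, rfl⟩)
      (Submodule.mem_sup_left (Submodule.mem_sup_left (Submodule.mem_span_singleton.2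
        ⟨a, by rw [C_eq_algebraMap, Algebra.algebraMap_eq_smul_one]⟩)))
  refine pKernel_le_iff.2 ⟨?_, fun f k hf hk => ?_⟩
  · have h := hXC _ (self_mem_pKernel p _) (constantCoeff C)
    rwa [← eq_X_mul_shift_add_C] at h
  · rcases k with _ | k
    · rw [decimate_zero_eq_X_mul_add_C _ (by omega)]
      exact hXC _ (decimate_mem_pKernel p _ hf (by omega)) _
    · rw [← decimate_shift]
      exact Submodule.mem_sup_left (Submodule.mem_sup_right
        (decimate_mem_pKernel p _ hf (by omega)))

end Kernel

theorem kappa_shift_le (p : ℕ) [Fact p.Prime]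
    (C : PowerSeries (AlgebraicClosure (ZMod p))) :
    kappa p (shift C) ≤ 2 * kappa p C ∧ kappa p C ≤ 1 + 2 * kappa p (shift C) := by
  have hτ := pKernel_shift_le p C
  have hX := pKernel_le_sup_pKernel_shift p C
  constructor
  · simpa [kappa] using
      Submodule.finrank_le_of_le_sup_sup_map (W := ⊥) (shiftₗ _) (by rwa [bot_sup_eq]) fun _ =>
        Submodule.finiteDimensional_of_le hX
  · simpa [kappa, finrank_span_singleton] using
      Submodule.finrank_le_of_le_sup_sup_map _ hX fun _ => Submodule.finiteDimensional_of_le hτ
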